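/- Stationarity of the continuous q-binomial at the mean: for q ≠ 1, 0 < r < 1, n > 0, the function L(x) whose derivative is L'(x) = −ln_q(x) + ln_q(n−x) + x^{1−q}·ln_{2−q}(r) − (n−x)^{1−q}·ln_{2−q}(1−r) satisfies L'(x) = (1/(1−q))·(((n−x)/(1−r))^{1−q} − (x/r)^{1−q}); in particular L'(nr) = 0 and this is the unique zero of L' on (0,n). -/

import Mathlib

/-- exact algebraic form of L'(x) and unique stationarity at x = nr. -/
theorem q_binomial_stationarity (q n r : ℝ) (hq : q ≠ 1) (hn : 0 < n)
    (hr0 : 0 < r) (hr1 : r < 1) :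
    (∀ x : ℝ, 0 < x → x < n →
      -((x ^ (1 - q) - 1) / (1 - q)) + ((n - x) ^ (1 - q) - 1) / (1 - q)
          + x ^ (1 - q) * ((r ^ (q - 1) - 1) / (q - 1))
          - (n - x) ^ (1 - q) * (((1 - r) ^ (q - 1) - 1) / (q - 1))
        = (1 / (1 - q)) * (((n - x) / (1 - r)) ^ (1 - q) - (x / r) ^ (1 - q))) ∧
    ((1 / (1 - q)) * (((n - n * r) / (1 - r)) ^ (1 - q) - ((n * r) / r) ^ (1 - q)) = 0) ∧
    (∀ x : ℝ, 0 < x → x < n →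
      (1 / (1 - q)) * (((n - x) / (1 - r)) ^ (1 - q) - (x / r) ^ (1 - q)) = 0 → x = n * r) := by
  have hq1 : (1 : ℝ) - q ≠ 0 := sub_ne_zero.mpr (Ne.symm hq)
  have hq2 : q - 1 ≠ 0 := sub_ne_zero.mpr hq
  have h1r : (0 : ℝ) < 1 - r := by linarith
  refine ⟨?_, ?_, ?_⟩
  · intro x hx hxn
    have hnx : (0 : ℝ) < n - x := by linarith
    have e1 : ((n - x) / (1 - r)) ^ (1 - q)
        = (n - x) ^ (1 - q) * (1 - r) ^ (q - 1) := by
      rw [Real.div_rpow hnx.le h1r.le, show (q - 1) = -(1 - q) by ring,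
        Real.rpow_neg h1r.le, div_eq_mul_inv]
    have e2 : (x / r) ^ (1 - q) = x ^ (1 - q) * r ^ (q - 1) := by
      rw [Real.div_rpow hx.le hr0.le, show (q - 1) = -(1 - q) by ring,
        Real.rpow_neg hr0.le, div_eq_mul_inv]
    rw [e1, e2]
    field_simp
    ring
  · have e3 : (n - n * r) / (1 - r) = n := by field_simp
    have e4 : n * r / r = n := by field_simp
    rw [e3, e4, sub_self, mul_zero]
  · intro x hx hxn h
    have hnx : (0 : ℝ) < n - x := by linarith
    have h' : ((n - x) / (1 - r)) ^ (1 - q) = (x / r) ^ (1 - q) := by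
      have := mul_eq_zero.mp h
      rcases this with h0 | h0
      · exact absurd h0 (by simp [hq1])
      · linarith [sub_eq_zero.mp h0]
    have hb : (n - x) / (1 - r) = x / r :=
      Real.rpow_left_injOn hq1 (by simp only [Set.mem_setOf_eq]; positivity) (by simp only [Set.mem_setOf_eq]; positivity) h'
    have : r * (n - x) = x * (1 - r) := by
      field_simp at hb
      linarith [hb]
    nlinarith
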